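/- Let Ω ⊆ ℂ be open, f₁ : Ω → ℂ holomorphic with f₁' ≠ 0 on Ω, and define N : Ω → ℝ³ by N = (2Re f₁/(1+|f₁|²), 2Im f₁/(1+|f₁|²), (|f₁|²−1)/(1+|f₁|²)) and τ := log(2|f₁'|/(1+|f₁|²)). Let ρ : Ω → ℝ be any smooth function and define X : Ω → ℝ³ by X := e^{−2τ}(ρ_x N_x + ρ_y N_y) + ρ N (i.e. X = ∇ρ + ρN, the gradient taken with respect to the metric e^{2τ}(dx²+dy²)). Then on Ω one has ⟨X, N⟩ = ρ, ⟨X_x, N⟩ = 0 and ⟨X_y, N⟩ = 0; that is, N is a unit normal (Gauss map) for the map X and ρ is its support function. -/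

import Mathlib

/-!
Write `N = σ ∘ f₁` with `σ` the inverse stereographic projection, which is conformal with factor
`2 / (1 + |w|²)`. As `f₁` is holomorphic, `N_x` and `N_y` are orthogonal to each other and to `N`,
with `|N_x|² = |N_y|² = e^{2τ}`. Hence `⟨X, N⟩ = ρ`, `⟨X, N_x⟩ = ρ_x` and `⟨X, N_y⟩ = ρ_y`;
differentiating the first identity and comparing with the other two gives `⟨X_x, N⟩ = 0` and
`⟨X_y, N⟩ = 0`.
-/

open scoped RealInnerProductSpace

/-- Partial derivative in the `x`-direction of a function on `ℂ ≅ ℝ²`. -/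
noncomputable def pdx (u : ℂ → ℝ) (z : ℂ) : ℝ := fderiv ℝ u z 1

/-- Partial derivative in the `y`-direction of a function on `ℂ ≅ ℝ²`. -/
noncomputable def pdy (u : ℂ → ℝ) (z : ℂ) : ℝ := fderiv ℝ u z Complex.I

open scoped Topology
open Complex (I)

theorem ContDiffOn.fderiv_apply_of_isOpen {𝕜 E F : Type*} [NontriviallyNormedField 𝕜]
    [NormedAddCommGroup E] [NormedSpace 𝕜 E] [NormedAddCommGroup F] [NormedSpace 𝕜 F] {f : E → F}
    {s : Set E} {m n : WithTop ℕ∞} (hf : ContDiffOn 𝕜 n f s) (hs : IsOpen s) (hmn : m + 1 ≤ n)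
    (v : E) : ContDiffOn 𝕜 m (fun x => fderiv 𝕜 f x v) s :=
  (hf.fderiv_of_isOpen hs hmn).clm_apply contDiffOn_const

theorem inner_fderiv_eq_zero_of_inner_eventuallyEq {V F : Type*} [NormedAddCommGroup V]
    [NormedSpace ℝ V] [NormedAddCommGroup F] [InnerProductSpace ℝ F] {X N : V → F} {ρ : V → ℝ}
    {z v : V} (hX : DifferentiableAt ℝ X z) (hN : DifferentiableAt ℝ N z)
    (hρ : (fun w => ⟪X w, N w⟫) =ᶠ[𝓝 z] ρ) (hv : ⟪X z, fderiv ℝ N z v⟫ = fderiv ℝ ρ z v) :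
    ⟪fderiv ℝ X z v, N z⟫ = 0 := by
  have h := fderiv_inner_apply ℝ hX hN v
  rw [hρ.fderiv_eq, hv] at h
  linarith

section ConformalFrame

variable {F : Type*} [NormedAddCommGroup F] [InnerProductSpace ℝ F]

structure IsConformalFrame (n a b : F) (c : ℝ) : Prop where
  inner_normal_self : ⟪n, n⟫ = 1
  inner_left_normal : ⟪a, n⟫ = 0
  inner_right_normal : ⟪b, n⟫ = 0
  inner_left_self : ⟪a, a⟫ = c
  inner_right_self : ⟪b, b⟫ = c
  inner_left_right : ⟪a, b⟫ = 0

namespace IsConformalFrame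

variable {n a b : F} {c : ℝ} (hf : IsConformalFrame n a b c) (p q r : ℝ)
include hf

theorem inner_normal :
    ⟪c⁻¹ • (p • a + q • b) + r • n, n⟫ = r := by
  simp only [inner_add_left, real_inner_smul_left, hf.inner_left_normal, hf.inner_right_normal,
    hf.inner_normal_self]
  ring

theorem inner_left (hc : c ≠ 0) :
    ⟪c⁻¹ • (p • a + q • b) + r • n, a⟫ = p := by
  simp only [inner_add_left, real_inner_smul_left, hf.inner_left_self, real_inner_comm a b,
    hf.inner_left_right, real_inner_comm a n, hf.inner_left_normal]
  field_simp
  ring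

theorem inner_right (hc : c ≠ 0) :
    ⟪c⁻¹ • (p • a + q • b) + r • n, b⟫ = q := by
  simp only [inner_add_left, real_inner_smul_left, hf.inner_right_self, hf.inner_left_right,
    real_inner_comm b n, hf.inner_right_normal]
  field_simp
  ring

end IsConformalFrame

theorem inner_eq_and_inner_fderiv_eq_zero_of_isConformalFrame {V : Type*}
    [NormedAddCommGroup V] [NormedSpace ℝ V] {Ω : Set V} (hΩ : IsOpen Ω) {N X : V → F} {ρ c : V → ℝ} {u v : V}
    (hN : ContDiffOn ℝ 2 N Ω) (hρ : ContDiffOn ℝ 2 ρ Ω)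
    (hframe : ∀ z ∈ Ω, IsConformalFrame (N z) (fderiv ℝ N z u) (fderiv ℝ N z v) (c z))
    (hc : ∀ z ∈ Ω, c z ≠ 0)
    (hX : ∀ z ∈ Ω, X z = (c z)⁻¹ • (fderiv ℝ ρ z u • fderiv ℝ N z u +
      fderiv ℝ ρ z v • fderiv ℝ N z v) + ρ z • N z) :
    ∀ z ∈ Ω, ⟪X z, N z⟫ = ρ z ∧ ⟪fderiv ℝ X z u, N z⟫ = 0 ∧ ⟪fderiv ℝ X z v, N z⟫ = 0 := by
  have hNu : ContDiffOn ℝ 1 (fun z => fderiv ℝ N z u) Ω := hN.fderiv_apply_of_isOpen hΩ le_rfl u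
  have hNv : ContDiffOn ℝ 1 (fun z => fderiv ℝ N z v) Ω := hN.fderiv_apply_of_isOpen hΩ le_rfl v
  have hcs : ContDiffOn ℝ 1 c Ω :=
    (hNu.inner ℝ hNu).congr fun z hz => (hframe z hz).inner_left_self.symm
  have hXs : ContDiffOn ℝ 1 X Ω :=
    (((hcs.inv hc).smul (((hρ.fderiv_apply_of_isOpen hΩ le_rfl u).smul hNu).add
      ((hρ.fderiv_apply_of_isOpen hΩ le_rfl v).smul hNv))).add
      ((hρ.of_le one_le_two).smul (hN.of_le one_le_two))).congr hX
  have hsupport : ∀ z ∈ Ω, ⟪X z, N z⟫ = ρ z := fun z hz => by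
    rw [hX z hz]; exact (hframe z hz).inner_normal _ _ _
  intro z hz
  have hzΩ : Ω ∈ 𝓝 z := hΩ.mem_nhds hz
  have hXd : DifferentiableAt ℝ X z := (hXs.differentiableOn one_ne_zero z hz).differentiableAt hzΩ
  have hNd : DifferentiableAt ℝ N z := (hN.differentiableOn two_ne_zero z hz).differentiableAt hzΩ
  have hρ_eq : (fun w => ⟪X w, N w⟫) =ᶠ[𝓝 z] ρ := Filter.eventuallyEq_of_mem hzΩ hsupport
  refine ⟨hsupport z hz, inner_fderiv_eq_zero_of_inner_eventuallyEq hXd hNd hρ_eq ?_,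
    inner_fderiv_eq_zero_of_inner_eventuallyEq hXd hNd hρ_eq ?_⟩
  · rw [hX z hz]; exact (hframe z hz).inner_left _ _ _ (hc z hz)
  · rw [hX z hz]; exact (hframe z hz).inner_right _ _ _ (hc z hz)

end ConformalFrame

section InverseStereographic

variable {E F : Type*} [NormedAddCommGroup E] [InnerProductSpace ℝ E]
  [NormedAddCommGroup F] [InnerProductSpace ℝ F] (ι : E →ₗᵢ[ℝ] F) (e : F)

/-- For a unit vector `e ⊥ ι E`, the inverse of the stereographic projection of the unit sphere
of `F` from `e` onto `ι E`. -/
noncomputable def invStereo (w : E) : F :=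
  (1 + ‖w‖ ^ 2)⁻¹ • ((2 : ℝ) • ι w + (‖w‖ ^ 2 - 1) • e)

theorem contDiff_invStereo {n : WithTop ℕ∞} : ContDiff ℝ n (invStereo ι e) := by
  have hq : ContDiff ℝ n fun w : E => 1 + ‖w‖ ^ 2 := contDiff_const.add (contDiff_norm_sq ℝ)
  exact (hq.inv fun w => by positivity).smul
    ((contDiff_const.smul ι.toContinuousLinearMap.contDiff).add
      (((contDiff_norm_sq ℝ).sub contDiff_const).smul contDiff_const))

theorem fderiv_invStereo_apply (w h : E) :
    fderiv ℝ (invStereo ι e) w h =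
      (1 + ‖w‖ ^ 2)⁻¹ • ((2 : ℝ) • ι h + (2 * ⟪w, h⟫) • e)
        - (2 * ⟪w, h⟫ / (1 + ‖w‖ ^ 2) ^ 2) • ((2 : ℝ) • ι w + (‖w‖ ^ 2 - 1) • e) := by
  have hq : HasFDerivAt (fun w : E => 1 + ‖w‖ ^ 2) (2 • innerSL ℝ w) w :=
    (hasStrictFDerivAt_norm_sq w).hasFDerivAt.const_add 1
  have hP : HasFDerivAt (fun w : E => (2 : ℝ) • ι w + (‖w‖ ^ 2 - 1) • e) _ w :=
    ((ι.toContinuousLinearMap.hasFDerivAt).const_smul (2 : ℝ)).add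
      (((hasStrictFDerivAt_norm_sq w).hasFDerivAt.sub_const 1).smul_const e)
  have hσ : HasFDerivAt (invStereo ι e) _ w :=
    ((hasDerivAt_inv (by positivity)).comp_hasFDerivAt w hq).smul hP
  rw [hσ.fderiv]
  simp only [add_apply, smul_apply, ContinuousLinearMap.smulRight_apply, innerSL_apply_apply,
    LinearIsometry.coe_toContinuousLinearMap, Function.comp_apply, smul_eq_mul]
  module

variable {ι e} (he : ‖e‖ = 1) (hιe : ∀ w, ⟪ι w, e⟫ = 0)
include he hιe

theorem inner_invStereo_self (w : E) : ⟪invStereo ι e w, invStereo ι e w⟫ = 1 := by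
  have hq : 1 + ‖w‖ ^ 2 ≠ 0 := by positivity
  simp only [invStereo, inner_add_left, inner_add_right, real_inner_smul_left,
    real_inner_smul_right, LinearIsometry.inner_map_map, hιe, fun w => real_inner_comm (ι w) e,
    real_inner_self_eq_norm_sq e, he, real_inner_self_eq_norm_sq w]
  field_simp
  ring

theorem inner_fderiv_invStereo_invStereo (w h : E) :
    ⟪fderiv ℝ (invStereo ι e) w h, invStereo ι e w⟫ = 0 := by
  have hq : 1 + ‖w‖ ^ 2 ≠ 0 := by positivity
  simp only [fderiv_invStereo_apply, invStereo, inner_add_left, inner_add_right, inner_sub_left,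
    real_inner_smul_left, real_inner_smul_right, LinearIsometry.inner_map_map, hιe,
    fun w => real_inner_comm (ι w) e, real_inner_self_eq_norm_sq e, he,
    real_inner_self_eq_norm_sq w, real_inner_comm w h]
  field_simp
  ring

theorem inner_fderiv_invStereo (w h k : E) :
    ⟪fderiv ℝ (invStereo ι e) w h, fderiv ℝ (invStereo ι e) w k⟫ =
      (2 / (1 + ‖w‖ ^ 2)) ^ 2 * ⟪h, k⟫ := by
  have hq : 1 + ‖w‖ ^ 2 ≠ 0 := by positivity
  simp only [fderiv_invStereo_apply, inner_add_left, inner_add_right, inner_sub_left,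
    inner_sub_right, real_inner_smul_left, real_inner_smul_right, LinearIsometry.inner_map_map,
    hιe, fun w => real_inner_comm (ι w) e, real_inner_self_eq_norm_sq e, he,
    real_inner_self_eq_norm_sq w, real_inner_comm w h]
  field_simp
  ring

end InverseStereographic

section Holomorphic

theorem fderiv_comp_apply_of_differentiableAt_complex {F : Type*} [NormedAddCommGroup F]
    [NormedSpace ℝ F] {g : ℂ → F} {f : ℂ → ℂ} {z : ℂ} (hg : DifferentiableAt ℝ g (f z))
    (hf : DifferentiableAt ℂ f z) (v : ℂ) :
    fderiv ℝ (g ∘ f) z v = fderiv ℝ g (f z) (deriv f z * v) := by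
  rw [fderiv_comp z hg (hf.restrictScalars ℝ),
    (hf.hasDerivAt.hasFDerivAt.restrictScalars ℝ).fderiv]
  simp [mul_comm]

variable {F : Type*} [NormedAddCommGroup F] [InnerProductSpace ℝ F] {ι : ℂ →ₗᵢ[ℝ] F} {e : F}

theorem isConformalFrame_invStereo_comp (he : ‖e‖ = 1) (hιe : ∀ w, ⟪ι w, e⟫ = 0) {f : ℂ → ℂ}
    {z : ℂ} (hf : DifferentiableAt ℂ f z) :
    IsConformalFrame (invStereo ι e (f z)) (fderiv ℝ (invStereo ι e ∘ f) z 1)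
      (fderiv ℝ (invStereo ι e ∘ f) z I) ((2 / (1 + ‖f z‖ ^ 2)) ^ 2 * ‖deriv f z‖ ^ 2) := by
  have hσ := (contDiff_invStereo ι e (n := 1)).differentiable one_ne_zero (f z)
  simp only [fderiv_comp_apply_of_differentiableAt_complex hσ hf]
  refine ⟨inner_invStereo_self he hιe _, inner_fderiv_invStereo_invStereo he hιe _ _,
    inner_fderiv_invStereo_invStereo he hιe _ _, ?_, ?_, ?_⟩ <;>
    rw [inner_fderiv_invStereo he hιe]
  · rw [mul_one, real_inner_self_eq_norm_sq]
  · rw [real_inner_self_eq_norm_sq, norm_mul, Complex.norm_I, mul_one]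
  · have h : ⟪deriv f z, deriv f z * I⟫ = 0 := by simp [Complex.inner]; ring
    rw [mul_one, h, mul_zero]

end Holomorphic

noncomputable def complexPlaneEmbedding : ℂ →ₗᵢ[ℝ] EuclideanSpace ℝ (Fin 3) where
  toFun w := !₂[w.re, w.im, 0]
  map_add' v w := by ext i; fin_cases i <;> simp
  map_smul' c w := by ext i; fin_cases i <;> simp
  norm_map' w := by
    simp [EuclideanSpace.norm_eq, Fin.sum_univ_three, Complex.norm_def, Complex.normSq_apply, sq]

theorem invStereo_complexPlaneEmbedding_apply (w : ℂ) :
    invStereo complexPlaneEmbedding (EuclideanSpace.single 2 1) w =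
      !₂[2 * w.re / (1 + ‖w‖ ^ 2), 2 * w.im / (1 + ‖w‖ ^ 2), (‖w‖ ^ 2 - 1) / (1 + ‖w‖ ^ 2)] := by
  ext i
  fin_cases i <;> simp [invStereo, complexPlaneEmbedding, div_eq_inv_mul]

theorem gauss_map_and_support_function_of_support_parametrization
    (Ω : Set ℂ) (hΩ : IsOpen Ω) (f₁ : ℂ → ℂ)
    (hf₁ : DifferentiableOn ℂ f₁ Ω) (hf₁' : ∀ z ∈ Ω, deriv f₁ z ≠ 0)
    (N : ℂ → EuclideanSpace ℝ (Fin 3))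
    (hN : ∀ z ∈ Ω,
      N z 0 = 2 * (f₁ z).re / (1 + ‖f₁ z‖ ^ 2) ∧
      N z 1 = 2 * (f₁ z).im / (1 + ‖f₁ z‖ ^ 2) ∧
      N z 2 = (‖f₁ z‖ ^ 2 - 1) / (1 + ‖f₁ z‖ ^ 2))
    (τ : ℂ → ℝ)
    (hτ : ∀ z ∈ Ω, τ z =
      Real.log (2 * ‖deriv f₁ z‖ / (1 + ‖f₁ z‖ ^ 2)))
    (ρ : ℂ → ℝ) (hρ : ContDiffOn ℝ (⊤ : ℕ∞) ρ Ω)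
    (X : ℂ → EuclideanSpace ℝ (Fin 3))
    (hX : ∀ z ∈ Ω, X z = Real.exp (-(2 * τ z)) •
        (pdx ρ z • fderiv ℝ N z 1 + pdy ρ z • fderiv ℝ N z Complex.I) + ρ z • N z) :
    ∀ z ∈ Ω, ⟪X z, N z⟫ = ρ z ∧
      ⟪fderiv ℝ X z 1, N z⟫ = 0 ∧ ⟪fderiv ℝ X z Complex.I, N z⟫ = 0 := by
  have hNσ : Set.EqOn N (invStereo complexPlaneEmbedding (EuclideanSpace.single 2 1) ∘ f₁) Ω :=
      fun z hz => by
    obtain ⟨h0, h1, h2⟩ := hN z hz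
    ext i
    fin_cases i <;> simp [invStereo_complexPlaneEmbedding_apply, h0, h1, h2]
  have hNs : ContDiffOn ℝ 2 N Ω :=
    ((contDiff_invStereo _ _).comp_contDiffOn ((hf₁.contDiffOn hΩ).restrict_scalars ℝ)).congr hNσ
  have hframe : ∀ z ∈ Ω, IsConformalFrame (N z) (fderiv ℝ N z 1) (fderiv ℝ N z I)
      (Real.exp (2 * τ z)) := fun z hz => by
    have hf' : 0 < ‖deriv f₁ z‖ := norm_pos_iff.mpr (hf₁' z hz)
    rw [(Filter.eventuallyEq_of_mem (hΩ.mem_nhds hz) hNσ).fderiv_eq, hNσ hz, Function.comp_apply,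
      hτ z hz, two_mul, Real.exp_add, Real.exp_log (by positivity)]
    convert isConformalFrame_invStereo_comp (ι := complexPlaneEmbedding)
      (e := EuclideanSpace.single 2 1) (by simp)
      (by simp [complexPlaneEmbedding, EuclideanSpace.inner_single_right])
      (hf₁.differentiableAt (hΩ.mem_nhds hz)) using 1
    ring
  exact inner_eq_and_inner_fderiv_eq_zero_of_isConformalFrame hΩ hNs
    (hρ.of_le (WithTop.coe_le_coe.mpr le_top)) hframe (fun z _ => (Real.exp_pos _).ne')
    fun z hz => by rw [hX z hz, Real.exp_neg]; rfl
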